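/- Let the T recorded columns of (U_L, Y_L) each be a trajectory of the LTI system with initial states given by the columns of X_1, assume the stacked matrix [X_1; U_L] ∈ ℝ^{(n+Lm)×T} has full row rank n + Lm, and assume the observability matrix O_{T_ini}(A,C) has full column rank n. Let M† be a Moore–Penrose pseudoinverse of M = [Y_ini; U_ini; U_N] and set P* = Y_N M†. Suppose (u_ini, y_ini) are the first T_ini inputs and outputs of some trajectory of the system (i.e., they are generated by the system from some initial state). Then for every u_N ∈ ℝ^{Nm} and y_N ∈ ℝ^{Np}: there exists g ∈ ℝ^T with Y_ini g = y_ini, U_ini g = u_ini, U_N g = u_N, and Y_N g = y_N, if and only if y_N = P* · [y_ini; u_ini; u_N]. In other words, the DeePC constraint set and the SPC constraint set describe the same pairs (u_N, y_N). -/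

import Mathlib

open Matrix

/-- `(u, y)` is a trajectory of the discrete-time LTI system `(A, B, C, D)` of length `L`,
started from the initial state `x₁`. -/
def IsTrajectoryFrom {n m p : ℕ} (A : Matrix (Fin n) (Fin n) ℝ) (B : Matrix (Fin n) (Fin m) ℝ)
    (C : Matrix (Fin p) (Fin n) ℝ) (D : Matrix (Fin p) (Fin m) ℝ) (L : ℕ)
    (x₁ : Fin n → ℝ) (u : Fin L → Fin m → ℝ) (y : Fin L → Fin p → ℝ) : Prop :=
  ∃ x : Fin L → Fin n → ℝ,
    (∀ h : 0 < L, x ⟨0, h⟩ = x₁) ∧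
    (∀ k : ℕ, ∀ h : k + 1 < L,
      x ⟨k + 1, h⟩ =
        A.mulVec (x ⟨k, Nat.lt_of_succ_lt h⟩) + B.mulVec (u ⟨k, Nat.lt_of_succ_lt h⟩)) ∧
    (∀ k : Fin L, y k = C.mulVec (x k) + D.mulVec (u k))

/-- `(u, y)` is a trajectory of the discrete-time LTI system `(A, B, C, D)` of length `L`. -/
def IsTrajectory {n m p : ℕ} (A : Matrix (Fin n) (Fin n) ℝ) (B : Matrix (Fin n) (Fin m) ℝ)
    (C : Matrix (Fin p) (Fin n) ℝ) (D : Matrix (Fin p) (Fin m) ℝ) (L : ℕ)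
    (u : Fin L → Fin m → ℝ) (y : Fin L → Fin p → ℝ) : Prop :=
  ∃ x₁ : Fin n → ℝ, IsTrajectoryFrom A B C D L x₁ u y

/-- The observability matrix `O_l(A, C) = [C; CA; …; CA^{l-1}]`. -/
def obsMat {n p : ℕ} (A : Matrix (Fin n) (Fin n) ℝ) (C : Matrix (Fin p) (Fin n) ℝ) (l : ℕ) :
    Matrix (Fin l × Fin p) (Fin n) ℝ :=
  fun ki j => (C * A ^ (ki.1 : ℕ)) ki.2 j

/-- `Mp` is a Moore–Penrose pseudoinverse of `M`. -/
def IsMoorePenrose {q T : Type*} [Fintype q] [Fintype T]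
    (M : Matrix q T ℝ) (Mp : Matrix T q ℝ) : Prop :=
  M * Mp * M = M ∧ Mp * M * Mp = Mp ∧ (M * Mp)ᵀ = M * Mp ∧ (Mp * M)ᵀ = Mp * M

/-!
Every linear combination `g` of the recorded columns is again a trajectory, with initial state
`X₁ g`, inputs `U_L g` and outputs `Y_L g`. If `M g = 0` this trajectory has zero input and zero
past output, so observability forces `X₁ g = 0` and hence `Y_N g = 0`. Thus `ker M ⊆ ker Y_N`,
and `M M† M = M` turns this into `Y_N M† M = Y_N`: every DeePC solution `g` satisfies
`y_N = Y_N g = P* M g`. Conversely, full row rank of `[X₁; U_L]` gives a `g` with initial state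
`X₁ g` equal to that of `(u_ini, y_ini)` and inputs `(u_ini, u_N)`; by causality its past outputs
are `y_ini`, so `M g` is the SPC data vector and `Y_N g = P* M g = y_N`.
-/

namespace Matrix

variable {K m n : Type*} [Field K] [Fintype n]

theorem mulVec_surjective_of_rank_eq_card [Fintype m] (A : Matrix m n K)
    (h : A.rank = Fintype.card m) : Function.Surjective A.mulVec := by
  have : LinearMap.range A.mulVecLin = ⊤ := by
    apply Submodule.eq_top_of_finrank_eq
    rw [← rank, h, Module.finrank_fintype_fun_eq_card]
  exact LinearMap.range_eq_top.1 this

theorem mulVec_injective_of_rank_eq_card (A : Matrix m n K) (h : A.rank = Fintype.card n) :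
    Function.Injective A.mulVec := by
  have hker : LinearMap.ker A.mulVecLin = ⊥ := by
    rw [← Submodule.finrank_eq_zero]
    have := LinearMap.finrank_range_add_finrank_ker A.mulVecLin
    rw [← rank, h, Module.finrank_fintype_fun_eq_card] at this
    omega
  exact LinearMap.ker_eq_bot.1 hker

theorem mul_mulVec_mulVec_eq_of_ker_le {R q r : Type*} [CommRing R] [Fintype q]
    {M : Matrix q n R} {Mp : Matrix n q R} {Y : Matrix r n R} (hM : M * Mp * M = M)
    (hker : ∀ g, M *ᵥ g = 0 → Y *ᵥ g = 0) (g : n → R) :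
    (Y * Mp) *ᵥ (M *ᵥ g) = Y *ᵥ g := by
  have hproj : M *ᵥ (g - (Mp * M) *ᵥ g) = 0 := by
    rw [mulVec_sub, mulVec_mulVec, ← Matrix.mul_assoc, hM, sub_self]
  have hY := hker _ hproj
  rw [mulVec_sub, sub_eq_zero] at hY
  rw [hY, mulVec_mulVec, mulVec_mulVec, Matrix.mul_assoc]

end Matrix

section Trajectory

variable {n m p : ℕ} (A : Matrix (Fin n) (Fin n) ℝ) (B : Matrix (Fin n) (Fin m) ℝ)
  (C : Matrix (Fin p) (Fin n) ℝ) (D : Matrix (Fin p) (Fin m) ℝ)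

def trajectorySubmodule (L : ℕ) :
    Submodule ℝ ((Fin n → ℝ) × (Fin L → Fin m → ℝ) × (Fin L → Fin p → ℝ)) where
  carrier := {w | IsTrajectoryFrom A B C D L w.1 w.2.1 w.2.2}
  zero_mem' := ⟨0, fun _ => rfl, fun _ _ => by simp, fun _ => by simp⟩
  add_mem' := by
    rintro w w' ⟨x, hx₁, hx, hy⟩ ⟨x', hx₁', hx', hy'⟩
    refine ⟨x + x', fun h => ?_, fun k h => ?_, fun k => ?_⟩ <;>
      simp only [Prod.fst_add, Prod.snd_add, Pi.add_apply, hx₁, hx₁', hx, hx', hy, hy',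
        mulVec_add] <;>
      abel
  smul_mem' := by
    rintro c w ⟨x, hx₁, hx, hy⟩
    refine ⟨c • x, fun h => ?_, fun k h => ?_, fun k => ?_⟩ <;>
      simp only [Prod.smul_fst, Prod.smul_snd, Pi.smul_apply, hx₁, hx, hy, mulVec_smul, smul_add]

variable {A B C D}

theorem mem_trajectorySubmodule {L : ℕ} {x₁ : Fin n → ℝ} {u : Fin L → Fin m → ℝ}
    {y : Fin L → Fin p → ℝ} :
    (x₁, u, y) ∈ trajectorySubmodule A B C D L ↔ IsTrajectoryFrom A B C D L x₁ u y :=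
  Iff.rfl

theorem IsTrajectoryFrom.output_eq_of_input_eq_zero {L : ℕ} {x₁ : Fin n → ℝ}
    {y : Fin L → Fin p → ℝ} (h : IsTrajectoryFrom A B C D L x₁ 0 y) (k : Fin L) :
    y k = (C * A ^ (k : ℕ)) *ᵥ x₁ := by
  obtain ⟨x, hx₁, hx, hy⟩ := h
  have hstate : ∀ (k : ℕ) (hk : k < L), x ⟨k, hk⟩ = (A ^ k) *ᵥ x₁ := by
    intro k
    induction k with
    | zero => intro hk; simp [hx₁ hk]
    | succ k ih => intro hk; simp [hx k hk, ih, mulVec_mulVec, pow_succ']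
  simp [hy k, ← mulVec_mulVec, ← hstate k k.2]

theorem IsTrajectoryFrom.output_unique {L : ℕ} {x₁ : Fin n → ℝ} {u : Fin L → Fin m → ℝ}
    {y y' : Fin L → Fin p → ℝ} (h : IsTrajectoryFrom A B C D L x₁ u y)
    (h' : IsTrajectoryFrom A B C D L x₁ u y') : y = y' := by
  have hdiff := sub_mem (mem_trajectorySubmodule.2 h) (mem_trajectorySubmodule.2 h')
  rw [Prod.mk_sub_mk, Prod.mk_sub_mk, sub_self, sub_self] at hdiff
  funext k
  simpa [sub_eq_zero] using (mem_trajectorySubmodule.1 hdiff).output_eq_of_input_eq_zero k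

theorem IsTrajectoryFrom.of_append {a b : ℕ} {x₁ : Fin n → ℝ} {u : Fin a → Fin m → ℝ}
    {u' : Fin b → Fin m → ℝ} {y : Fin a → Fin p → ℝ} {y' : Fin b → Fin p → ℝ}
    (h : IsTrajectoryFrom A B C D (a + b) x₁ (Fin.append u u') (Fin.append y y')) :
    IsTrajectoryFrom A B C D a x₁ u y := by
  obtain ⟨x, hx₁, hx, hy⟩ := h
  refine ⟨x ∘ Fin.castAdd b, fun h => hx₁ (by omega), fun k h => ?_, fun k => ?_⟩
  · rw [← Fin.append_left u u']
    exact hx k (by omega)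
  · rw [← Fin.append_left y y', ← Fin.append_left u u']
    exact hy _

end Trajectory

theorem obsMat_mulVec_apply {n p l : ℕ} (A : Matrix (Fin n) (Fin n) ℝ)
    (C : Matrix (Fin p) (Fin n) ℝ) (x : Fin n → ℝ) (k : Fin l) (i : Fin p) :
    (obsMat A C l *ᵥ x) (k, i) = ((C * A ^ (k : ℕ)) *ᵥ x) i :=
  rfl

section Data

variable {n m p a b : ℕ} {ι : Type*} [Fintype ι]
  {A : Matrix (Fin n) (Fin n) ℝ} {B : Matrix (Fin n) (Fin m) ℝ}
  {C : Matrix (Fin p) (Fin n) ℝ} {D : Matrix (Fin p) (Fin m) ℝ}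
  {X : Matrix (Fin n) ι ℝ} {U₁ : Matrix (Fin a × Fin m) ι ℝ} {U₂ : Matrix (Fin b × Fin m) ι ℝ}
  {Y₁ : Matrix (Fin a × Fin p) ι ℝ} {Y₂ : Matrix (Fin b × Fin p) ι ℝ}

variable (A B C D X U₁ U₂ Y₁ Y₂) in
def IsTrajectoryData : Prop :=
  ∀ j, IsTrajectoryFrom A B C D (a + b) (fun i => X i j)
    (Fin.append (fun k i => U₁ (k, i) j) (fun k i => U₂ (k, i) j))
    (Fin.append (fun k i => Y₁ (k, i) j) (fun k i => Y₂ (k, i) j))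

theorem Fin.append_mulVec {R : Type*} [CommSemiring R] {q : ℕ} (P : Matrix (Fin a × Fin q) ι R)
    (Q : Matrix (Fin b × Fin q) ι R) (g : ι → R) :
    Fin.append (fun k i => (P *ᵥ g) (k, i)) (fun k i => (Q *ᵥ g) (k, i)) =
      ∑ j, g j • Fin.append (fun k i => P (k, i) j) (fun k i => Q (k, i) j) := by
  funext k i
  refine Fin.addCases (fun k => ?_) (fun k => ?_) k <;>
    simp [mulVec, dotProduct, Finset.sum_apply, mul_comm]

theorem isTrajectoryFrom_mulVec
    (hdata : IsTrajectoryData A B C D X U₁ U₂ Y₁ Y₂)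
    (g : ι → ℝ) :
    IsTrajectoryFrom A B C D (a + b) (X *ᵥ g)
      (Fin.append (fun k i => (U₁ *ᵥ g) (k, i)) (fun k i => (U₂ *ᵥ g) (k, i)))
      (Fin.append (fun k i => (Y₁ *ᵥ g) (k, i)) (fun k i => (Y₂ *ᵥ g) (k, i))) := by
  have hX : X *ᵥ g = ∑ j, g j • fun i => X i j := by
    funext i
    simp [mulVec, dotProduct, Finset.sum_apply, mul_comm]
  rw [hX, Fin.append_mulVec, Fin.append_mulVec, ← mem_trajectorySubmodule, prod_mk_sum,
    prod_mk_sum]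
  exact
    Submodule.sum_mem _ fun j _ => Submodule.smul_mem _ (g j) (mem_trajectorySubmodule.2 (hdata j))

theorem mulVec_eq_zero_of_fromRows_mulVec_eq_zero
    (hdata : IsTrajectoryData A B C D X U₁ U₂ Y₁ Y₂)
    (hobs : (obsMat A C a).rank = n) {g : ι → ℝ} (hg : fromRows Y₁ (fromRows U₁ U₂) *ᵥ g = 0) :
    Y₂ *ᵥ g = 0 := by
  simp only [fromRows_mulVec, ← Sum.elim_zero_zero, Sum.elim_eq_iff] at hg
  obtain ⟨hY₁, hU₁, hU₂⟩ := hg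
  have hU : Fin.append (fun k i => (U₁ *ᵥ g) (k, i)) (fun k i => (U₂ *ᵥ g) (k, i)) = 0 := by
    rw [hU₁, hU₂]
    exact Fin.append_castAdd_natAdd (f := 0)
  have htraj := isTrajectoryFrom_mulVec hdata g
  rw [hU, hY₁] at htraj
  replace htraj := htraj.output_eq_of_input_eq_zero
  have hX : X *ᵥ g = 0 := by
    refine (obsMat A C a).mulVec_injective_of_rank_eq_card (by simpa using hobs) ?_
    funext ⟨k, i⟩
    simpa [obsMat_mulVec_apply] using (congrFun (htraj (Fin.castAdd b k)) i).symm
  funext ⟨k, i⟩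
  simpa [hX] using congrFun (htraj (Fin.natAdd a k)) i

theorem exists_fromRows_mulVec_eq
    (hdata : IsTrajectoryData A B C D X U₁ U₂ Y₁ Y₂)
    (hrank : (fromRows X (fromRows U₁ U₂)).rank = n + (a + b) * m)
    {u : Fin a → Fin m → ℝ} {y : Fin a → Fin p → ℝ} (hini : IsTrajectory A B C D a u y)
    (u' : Fin b → Fin m → ℝ) :
    ∃ g, fromRows Y₁ (fromRows U₁ U₂) *ᵥ g = Sum.elim (fun ki => y ki.1 ki.2)
      (Sum.elim (fun ki => u ki.1 ki.2) (fun ki => u' ki.1 ki.2)) := by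
  obtain ⟨ξ, hξ⟩ := hini
  have hcard : (fromRows X (fromRows U₁ U₂)).rank =
      Fintype.card (Fin n ⊕ (Fin a × Fin m ⊕ Fin b × Fin m)) := by
    simp only [hrank, Fintype.card_sum, Fintype.card_prod, Fintype.card_fin]
    ring
  obtain ⟨g, hg⟩ := mulVec_surjective_of_rank_eq_card _ hcard
    (Sum.elim ξ (Sum.elim (fun ki => u ki.1 ki.2) (fun ki => u' ki.1 ki.2)))
  simp only [fromRows_mulVec, Sum.elim_eq_iff] at hg ⊢
  obtain ⟨hX, hU₁, hU₂⟩ := hg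
  refine ⟨g, ?_, hU₁, hU₂⟩
  have htraj := isTrajectoryFrom_mulVec hdata g
  rw [hX, hU₁, hU₂] at htraj
  have hpast := htraj.of_append.output_unique hξ
  funext ⟨k, i⟩
  exact congrFun (congrFun hpast k) i

end Data

/-- **Equivalence of the DeePC and SPC constraint sets.** Under the data assumptions
(recorded columns are trajectories with initial states the columns of `X₁`, full row rank of
`[X₁; U_L]`, full column rank of `O_{T_ini}(A,C)`) and for `(u_ini, y_ini)` generated by the
system, a pair `(u_N, y_N)` satisfies the DeePC constraint (existence of `g`) iff it satisfies
the SPC constraint `y_N = P* [y_ini; u_ini; u_N]` with `P* = Y_N M†`. -/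
theorem deepc_spc_constraint_equivalence {n m p T_ini N T : ℕ}
    (A : Matrix (Fin n) (Fin n) ℝ) (B : Matrix (Fin n) (Fin m) ℝ)
    (C : Matrix (Fin p) (Fin n) ℝ) (D : Matrix (Fin p) (Fin m) ℝ)
    (Uini : Matrix (Fin T_ini × Fin m) (Fin T) ℝ) (UN : Matrix (Fin N × Fin m) (Fin T) ℝ)
    (Yini : Matrix (Fin T_ini × Fin p) (Fin T) ℝ) (YN : Matrix (Fin N × Fin p) (Fin T) ℝ)
    (X1 : Matrix (Fin n) (Fin T) ℝ)
    (hdata : ∀ j : Fin T, IsTrajectoryFrom A B C D (T_ini + N) (fun i => X1 i j)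
      (Fin.append (fun k i => Uini (k, i) j) (fun k i => UN (k, i) j))
      (Fin.append (fun k i => Yini (k, i) j) (fun k i => YN (k, i) j)))
    (hrank : (Matrix.fromRows X1 (Matrix.fromRows Uini UN)).rank = n + (T_ini + N) * m)
    (hobs : (obsMat A C T_ini).rank = n)
    (M : Matrix ((Fin T_ini × Fin p) ⊕ (Fin T_ini × Fin m) ⊕ (Fin N × Fin m)) (Fin T) ℝ)
    (hM : M = Matrix.fromRows Yini (Matrix.fromRows Uini UN))
    (Mp : Matrix (Fin T) ((Fin T_ini × Fin p) ⊕ (Fin T_ini × Fin m) ⊕ (Fin N × Fin m)) ℝ)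
    (hMp : IsMoorePenrose M Mp)
    (uini : Fin T_ini → Fin m → ℝ) (yini : Fin T_ini → Fin p → ℝ)
    (hini : IsTrajectory A B C D T_ini uini yini) :
    ∀ (uN : Fin N → Fin m → ℝ) (yN : Fin N → Fin p → ℝ),
      (∃ g : Fin T → ℝ,
        Yini.mulVec g = (fun ki => yini ki.1 ki.2) ∧
        Uini.mulVec g = (fun ki => uini ki.1 ki.2) ∧
        UN.mulVec g = (fun ki => uN ki.1 ki.2) ∧
        YN.mulVec g = (fun ki => yN ki.1 ki.2)) ↔
      (fun ki : Fin N × Fin p => yN ki.1 ki.2) =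
        (YN * Mp).mulVec (Sum.elim (fun ki : Fin T_ini × Fin p => yini ki.1 ki.2)
          (Sum.elim (fun ki : Fin T_ini × Fin m => uini ki.1 ki.2)
            (fun ki : Fin N × Fin m => uN ki.1 ki.2))) := by
  intro uN yN
  set v := Sum.elim (fun ki : Fin T_ini × Fin p => yini ki.1 ki.2)
    (Sum.elim (fun ki : Fin T_ini × Fin m => uini ki.1 ki.2)
      (fun ki : Fin N × Fin m => uN ki.1 ki.2))
  have hfactor : ∀ g, (YN * Mp) *ᵥ (M *ᵥ g) = YN *ᵥ g :=
    mul_mulVec_mulVec_eq_of_ker_le hMp.1 fun g hg =>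
      mulVec_eq_zero_of_fromRows_mulVec_eq_zero hdata hobs (hM ▸ hg)
  have hMv : ∀ g, M *ᵥ g = v ↔ Yini *ᵥ g = (fun ki => yini ki.1 ki.2) ∧
      Uini *ᵥ g = (fun ki => uini ki.1 ki.2) ∧ UN *ᵥ g = (fun ki => uN ki.1 ki.2) := by
    intro g
    rw [hM, fromRows_mulVec, fromRows_mulVec, Sum.elim_eq_iff, Sum.elim_eq_iff]
  obtain ⟨g₀, hg₀⟩ : ∃ g, M *ᵥ g = v := hM ▸ exists_fromRows_mulVec_eq hdata hrank hini uN
  constructor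
  · rintro ⟨g, hYini, hUini, hUN, hYN⟩
    rw [← hYN, ← hfactor, (hMv g).2 ⟨hYini, hUini, hUN⟩]
  · intro hyN
    obtain ⟨hYini, hUini, hUN⟩ := (hMv g₀).1 hg₀
    exact ⟨g₀, hYini, hUini, hUN, by rw [hyN, ← hg₀, hfactor]⟩
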